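/- Scaling identity for the one-dimensional effective problem: if μ(y) := 1/a₀¹(z(y)) where y(z) = ∫₀^z a₀¹(t) dt, then under the change of variables z ↦ y and f(z/√B) = B^{1/4} g(y), one has λ_L(δ, B) − 1 = √B (λ_L(δ, 1) − 1), i.e. the map B ↦ λ_L(δ,B) satisfies λ_L(δ,B) = 1 + √B(λ_L(δ,1) − 1), where λ_L(δ,B) := 1 + inf over normalized f ∈ C_c^∞(ℝ,ℂ) of ∫_ℝ ( |f'(z)|²/(δ a₀^B(z)) − δ a₀^B(z) |f(z)|² ) dz. -/

import Mathlib

open MeasureTheory Real Pointwise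

/-- `a₀^B(z) = B ∫₀^∞ s e^{-Bs²/2}/√(s²+z²) ds`. -/
noncomputable def a0 (B z : ℝ) : ℝ :=
  B * ∫ s in Set.Ioi (0 : ℝ), s * Real.exp (-B * s ^ 2 / 2) / Real.sqrt (s ^ 2 + z ^ 2)

lemma scaled_smooth (r : ℂ) (c : ℝ) (hc : c ≠ 0) (g : ℝ → ℂ) (hg1 : ContDiff ℝ (⊤ : ℕ∞) g)
    (hg2 : HasCompactSupport g) :
    ContDiff ℝ (⊤ : ℕ∞) (fun z => r * g (c * z)) ∧ HasCompactSupport (fun z => r * g (c * z)) := by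
  constructor
  · exact contDiff_const.mul (hg1.comp (contDiff_const.mul contDiff_id))
  · have h1 : HasCompactSupport (g ∘ (fun z : ℝ => c * z)) :=
      hg2.comp_isClosedEmbedding (Homeomorph.mulLeft₀ c hc).isClosedEmbedding
    have h2 := h1.mul_left (f := fun _ : ℝ => r)
    exact h2

lemma scaled_deriv (r : ℂ) (c : ℝ) (g : ℝ → ℂ) (hg1 : ContDiff ℝ (⊤ : ℕ∞) g) (z : ℝ) :
    deriv (fun z => r * g (c * z)) z = r * ((c : ℂ) * deriv g (c * z)) := by
  have hgd : HasDerivAt g (deriv g (c * z)) (c * z) :=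
    ((hg1.differentiable (by simp)) (c * z)).hasDerivAt
  have hin : HasDerivAt (fun z : ℝ => c * z) c z := by
    simpa using (hasDerivAt_id z).const_mul c
  have h : HasDerivAt (g ∘ fun z : ℝ => c * z) (c • deriv g (c * z)) z :=
    HasDerivAt.scomp_of_eq z hgd hin rfl
  have h2 : HasDerivAt (fun z => r * g (c * z)) (r * (c • deriv g (c * z))) z :=
    h.const_mul r
  rw [h2.deriv]
  norm_num [Complex.real_smul]

lemma a0_scale (B z : ℝ) (hB : 0 < B) :
    a0 B z = Real.sqrt B * a0 1 (Real.sqrt B * z) := by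
  set c := Real.sqrt B with hc
  have hc0 : 0 < c := Real.sqrt_pos.2 hB
  have hc2 : c ^ 2 = B := Real.sq_sqrt hB.le
  have key : ∀ x : ℝ, (c * x) * Real.exp (-1 * (c * x) ^ 2 / 2) / Real.sqrt ((c * x) ^ 2 + (c * z) ^ 2)
      = x * Real.exp (-B * x ^ 2 / 2) / Real.sqrt (x ^ 2 + z ^ 2) := by
    intro x
    have h1 : (c * x) ^ 2 + (c * z) ^ 2 = c ^ 2 * (x ^ 2 + z ^ 2) := by ring
    have h2 : Real.sqrt ((c * x) ^ 2 + (c * z) ^ 2) = c * Real.sqrt (x ^ 2 + z ^ 2) := by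
      rw [h1, Real.sqrt_mul (sq_nonneg c), Real.sqrt_sq hc0.le]
    have h3 : -1 * (c * x) ^ 2 / 2 = -B * x ^ 2 / 2 := by
      rw [← hc2]; ring
    rw [h2, h3]
    rw [show c * x * Real.exp (-B * x ^ 2 / 2) = c * (x * Real.exp (-B * x ^ 2 / 2)) by ring]
    exact mul_div_mul_left _ _ hc0.ne'
  have hcomp := integral_comp_mul_left_Ioi
    (fun s => s * Real.exp (-1 * s ^ 2 / 2) / Real.sqrt (s ^ 2 + (c * z) ^ 2)) 0 hc0
  simp only [mul_zero, smul_eq_mul] at hcomp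
  simp_rw [key] at hcomp
  rw [a0, a0, hcomp]
  rw [← hc2]
  field_simp

/-- Energy scaling under `f z = √(√B) * g (√B * z)`. -/
lemma energy_scale (δ B : ℝ) (hδ : 0 < δ) (hB : 0 < B) (g : ℝ → ℂ) (hg1 : ContDiff ℝ (⊤ : ℕ∞) g) :
    (∫ z : ℝ, ‖(fun z => ((Real.sqrt (Real.sqrt B) : ℝ) : ℂ) * g (Real.sqrt B * z)) z‖ ^ 2)
      = (∫ y : ℝ, ‖g y‖ ^ 2) ∧
    (∫ z : ℝ, (‖deriv (fun z => ((Real.sqrt (Real.sqrt B) : ℝ) : ℂ) * g (Real.sqrt B * z)) z‖ ^ 2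
        / (δ * a0 B z) - δ * a0 B z *
        ‖(fun z => ((Real.sqrt (Real.sqrt B) : ℝ) : ℂ) * g (Real.sqrt B * z)) z‖ ^ 2))
      = Real.sqrt B * ∫ y : ℝ, (‖deriv g y‖ ^ 2 / (δ * a0 1 y)
        - δ * a0 1 y * ‖g y‖ ^ 2) := by
  set c := Real.sqrt B with hcdef
  have hc0 : 0 < c := Real.sqrt_pos.2 hB
  set r := Real.sqrt c with hrdef
  have hr0 : 0 < r := Real.sqrt_pos.2 hc0
  have hr2 : r ^ 2 = c := Real.sq_sqrt hc0.le
  have habs : ∀ z : ℝ, ‖((r : ℝ) : ℂ) * g (c * z)‖ ^ 2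
      = c * ‖g (c * z)‖ ^ 2 := by
    intro z
    rw [norm_mul, Complex.norm_real, Real.norm_eq_abs, abs_of_pos hr0, mul_pow, hr2]
  have hderiv : ∀ z : ℝ, ‖deriv (fun z => ((r : ℝ) : ℂ) * g (c * z)) z‖ ^ 2
      = c ^ 3 * ‖deriv g (c * z)‖ ^ 2 := by
    intro z
    rw [scaled_deriv _ _ _ hg1, norm_mul, norm_mul, Complex.norm_real, Real.norm_eq_abs, Complex.norm_real, Real.norm_eq_abs,
      abs_of_pos hr0, abs_of_pos hc0]
    rw [mul_pow, mul_pow, hr2]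
    ring
  constructor
  · simp_rw [habs]
    rw [integral_const_mul]
    have := Measure.integral_comp_mul_left (fun y => (‖g y‖ : ℝ) ^ 2) c
    rw [this, abs_of_pos (inv_pos.2 hc0), smul_eq_mul, ← mul_assoc, mul_inv_cancel₀ hc0.ne',
      one_mul]
  · have hpt : ∀ z : ℝ,
        ‖deriv (fun z => ((r : ℝ) : ℂ) * g (c * z)) z‖ ^ 2 / (δ * a0 B z)
          - δ * a0 B z * ‖((r : ℝ) : ℂ) * g (c * z)‖ ^ 2
        = c ^ 2 * (‖deriv g (c * z)‖ ^ 2 / (δ * a0 1 (c * z))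
          - δ * a0 1 (c * z) * ‖g (c * z)‖ ^ 2) := by
      intro z
      rw [hderiv, habs, a0_scale B z hB, ← hcdef]
      have t1 : c ^ 3 * ‖deriv g (c * z)‖ ^ 2 / (δ * (c * a0 1 (c * z)))
          = c ^ 2 * (‖deriv g (c * z)‖ ^ 2 / (δ * a0 1 (c * z))) := by
        rw [show δ * (c * a0 1 (c * z)) = c * (δ * a0 1 (c * z)) by ring,
          show c ^ 3 * ‖deriv g (c * z)‖ ^ 2
            = c * (c ^ 2 * ‖deriv g (c * z)‖ ^ 2) by ring,
          mul_div_mul_left _ _ hc0.ne', mul_div_assoc]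
      rw [t1]
      ring
    simp_rw [hpt]
    rw [integral_const_mul]
    have := Measure.integral_comp_mul_left (fun y => (‖deriv g y‖ ^ 2 / (δ * a0 1 y)
        - δ * a0 1 y * ‖g y‖ ^ 2)) c
    rw [this, abs_of_pos (inv_pos.2 hc0), smul_eq_mul, ← mul_assoc]
    congr 1
    rw [pow_two, mul_assoc, mul_inv_cancel₀ hc0.ne', mul_one]

/-- The ground state energy of the one-dimensional effective problem in the lowest
relativistic Landau level. -/
noncomputable def lamL (δ B : ℝ) : ℝ :=
  1 + sInf {E : ℝ | ∃ f : ℝ → ℂ, ContDiff ℝ (⊤ : ℕ∞) f ∧ HasCompactSupport f ∧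
    (∫ z : ℝ, ‖f z‖ ^ 2) = 1 ∧
    E = ∫ z : ℝ, (‖deriv f z‖ ^ 2 / (δ * a0 B z)
      - δ * a0 B z * ‖f z‖ ^ 2)}

theorem lamL_scaling (δ B : ℝ) (hδ : 0 < δ) (hB : 0 < B) :
    lamL δ B = 1 + Real.sqrt B * (lamL δ 1 - 1) := by
  set c := Real.sqrt B with hcdef
  have hc0 : 0 < c := Real.sqrt_pos.2 hB
  set r := Real.sqrt c with hrdef
  have hr0 : 0 < r := Real.sqrt_pos.2 hc0
  set S : ℝ → Set ℝ := fun b => {E : ℝ | ∃ f : ℝ → ℂ, ContDiff ℝ (⊤ : ℕ∞) f ∧ HasCompactSupport f ∧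
    (∫ z : ℝ, ‖f z‖ ^ 2) = 1 ∧
    E = ∫ z : ℝ, (‖deriv f z‖ ^ 2 / (δ * a0 b z)
      - δ * a0 b z * ‖f z‖ ^ 2)} with hSdef
  have hset : S B = c • S 1 := by
    ext E
    constructor
    · rintro ⟨f, hf1, hf2, hf3, hf4⟩
      set g : ℝ → ℂ := fun y => ((r⁻¹ : ℝ) : ℂ) * f (c⁻¹ * y) with hgdef
      obtain ⟨hg1, hg2⟩ := scaled_smooth ((r⁻¹ : ℝ) : ℂ) c⁻¹ (inv_ne_zero hc0.ne') f hf1 hf2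
      have feq : f = fun z => ((r : ℝ) : ℂ) * g (c * z) := by
        funext z
        have h1 : c⁻¹ * (c * z) = z := by field_simp
        simp only [hgdef, h1, ← mul_assoc]
        rw [show ((r : ℝ) : ℂ) * ((r⁻¹ : ℝ) : ℂ) = ((r * r⁻¹ : ℝ) : ℂ) by push_cast; ring,
          mul_inv_cancel₀ hr0.ne']
        simp
      obtain ⟨hnorm, hE⟩ := energy_scale δ B hδ hB g hg1
      rw [← feq] at hnorm hE
      refine ⟨∫ y : ℝ, (‖deriv g y‖ ^ 2 / (δ * a0 1 y)
        - δ * a0 1 y * ‖g y‖ ^ 2), ⟨g, hg1, hg2, by rw [← hnorm]; exact hf3, rfl⟩, ?_⟩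
      simp only [smul_eq_mul]
      rw [← hcdef] at hE
      rw [← hE]
      exact hf4.symm
    · rintro ⟨E', ⟨g, hg1, hg2, hg3, rfl⟩, rfl⟩
      obtain ⟨hf1, hf2⟩ := scaled_smooth ((r : ℝ) : ℂ) c hc0.ne' g hg1 hg2
      obtain ⟨hnorm, hE⟩ := energy_scale δ B hδ hB g hg1
      exact ⟨fun z => ((r : ℝ) : ℂ) * g (c * z), hf1, hf2, by rw [hnorm]; exact hg3, hE.symm⟩
  have hinf : sInf (S B) = c * sInf (S 1) := by
    rw [hset, Real.sInf_smul_of_nonneg hc0.le, smul_eq_mul]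
  show 1 + sInf (S B) = 1 + c * (lamL δ 1 - 1)
  rw [hinf]
  have : lamL δ 1 - 1 = sInf (S 1) := by
    show 1 + sInf (S 1) - 1 = sInf (S 1)
    ring
  rw [this]
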